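/- arXiv:2005.07814 — 5 statements merged into one kernel-verified Lean document; each statement's English description precedes it below -/
import Mathlib

section
/- Suppose the query sets S_1,...,S_t are all contiguous intervals of {1,...,1/δ} and the prior is uniform (π_i(0) = δ). Then the Bayesian posterior at time t is a simple function with at most 2t+1 intervals: there exists a partition of {1,...,1/δ} into disjoint contiguous intervals J_0^{(t)}, ..., J_{2t}^{(t)} such that for every u and every i ∈ J_u^{(t)}, π_i(t) = π_{J_u^{(t)}}(t)/|J_u^{(t)}|, where π_J = Σ_{i∈J} π_i. -/
open MeasureTheory Filter

namespace SearchPaper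

noncomputable section

/-- Likelihood of observing `y` when the indicator of the target being in the
query set is `x`, for a binary symmetric channel with crossover probability `q`. -/
def lik (q : ℝ) (x y : Bool) : ℝ := if x = y then 1 - q else q

/-- Crossover probability `p(δ|S|)` of a query set `S` (here `δ = 1/n`). -/
def crossover (p : ℝ → ℝ) (n : ℕ) (S : Finset (Fin n)) : ℝ := p ((S.card : ℝ) / n)

variable {n : ℕ}

/-- Probability of observing `y` given the posterior `π` and query set `S`. -/
def obsProb (p : ℝ → ℝ) (S : Finset (Fin n)) (π : Fin n → ℝ) (y : Bool) : ℝ :=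
  ∑ i, π i * lik (crossover p n S) (decide (i ∈ S)) y

/-- Bayes rule update of the posterior upon observing `y`. -/
def bayesUpdate (p : ℝ → ℝ) (S : Finset (Fin n)) (π : Fin n → ℝ) (y : Bool) (i : Fin n) : ℝ :=
  π i * lik (crossover p n S) (decide (i ∈ S)) y / obsProb p S π y

/-- Posterior process under a (deterministic stationary) strategy `γ`, along the
observation path `y`, starting from the uniform prior. -/
def posterior (p : ℝ → ℝ) (γ : (Fin n → ℝ) → Finset (Fin n)) (y : ℕ → Bool) :
    ℕ → Fin n → ℝ
  | 0 => fun _ => (n : ℝ)⁻¹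
  | t + 1 => bayesUpdate p (γ (posterior p γ y t)) (posterior p γ y t) (y t)

/-- Posterior process with an arbitrary prescribed sequence of query sets. -/
def posteriorSeq (p : ℝ → ℝ) (S : ℕ → Finset (Fin n)) (y : ℕ → Bool) :
    ℕ → Fin n → ℝ
  | 0 => fun _ => (n : ℝ)⁻¹
  | t + 1 => bayesUpdate p (S t) (posteriorSeq p S y t) (y t)

/-- Probability of the observation path `y 0, ..., y (t-1)` under strategy `γ`. -/
def pathProb (p : ℝ → ℝ) (γ : (Fin n → ℝ) → Finset (Fin n)) (y : ℕ → Bool) : ℕ → ℝ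
  | 0 => 1
  | t + 1 => pathProb p γ y t * obsProb p (γ (posterior p γ y t)) (posterior p γ y t) (y t)

/-- Extension of a finite observation path to an infinite one. -/
def extPath {t : ℕ} (y : Fin t → Bool) : ℕ → Bool := fun s => if h : s < t then y ⟨s, h⟩ else false

open Classical in
/-- Probability that the posterior at time `t` satisfies the predicate `φ`. -/
def probAt (p : ℝ → ℝ) (γ : (Fin n → ℝ) → Finset (Fin n)) (t : ℕ)
    (φ : (Fin n → ℝ) → Prop) : ℝ :=
  ∑ y : Fin t → Bool,
    if φ (posterior p γ (extPath y) t) then pathProb p γ (extPath y) t else 0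

open Classical in
/-- Expected value of the variable-length stopping time
`τ = min {t : max_i π_i(t) > 1 - ε}`, computed as `∑_{t≥0} P(τ > t)`. -/
def expectedTau (p : ℝ → ℝ) (γ : (Fin n → ℝ) → Finset (Fin n)) (ε : ℝ) : ℝ :=
  ∑' t : ℕ, ∑ y : Fin t → Bool,
    if ∀ s ≤ t, ∀ i, posterior p γ (extPath y) s i ≤ 1 - ε
    then pathProb p γ (extPath y) t else 0

open Classical in
/-- Probability that the declaration `θ̂ = argmax_i π_i(τ)` made at the variable-length
stopping time `τ = min {t : max_i π_i(t) > 1 - ε}` differs from the target `θ`. -/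
def errorProb (p : ℝ → ℝ) (γ : (Fin n → ℝ) → Finset (Fin n)) (ε : ℝ) : ℝ :=
  ∑' t : ℕ, ∑ y : Fin t → Bool,
    if (∀ s < t, ∀ i, posterior p γ (extPath y) s i ≤ 1 - ε) ∧
        (∃ i, 1 - ε < posterior p γ (extPath y) t i)
    then pathProb p γ (extPath y) t * (1 - ⨆ i, posterior p γ (extPath y) t i) else 0

/-- Kullback–Leibler divergence `D(Bern(a) ‖ Bern(b))`. -/
def klBern (a b : ℝ) : ℝ := a * Real.log (a / b) + (1 - a) * Real.log ((1 - a) / (1 - b))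

/-- `C₁(x) = D(Bern(x) ‖ Bern(1 - x))`. -/
def C1 (x : ℝ) : ℝ := klBern x (1 - x)

/-- `I(q, x)`: the mutual information between the input `X ~ Bern(q)` and the output of a
binary symmetric channel with crossover probability `x`. -/
def mutInfo (q x : ℝ) : ℝ :=
  q * klBern (1 - x) (q * (1 - x) + (1 - q) * x) +
    (1 - q) * klBern x (q * (1 - x) + (1 - q) * x)

/-- KL divergence between two distributions on a finite type. -/
def klFin {Y : Type*} [Fintype Y] (P Q : Y → ℝ) : ℝ := ∑ y, P y * Real.log (P y / Q y)

/-- Extrinsic Jensen–Shannon divergence of the posterior `π` with query set `S`. -/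
def EJS (p : ℝ → ℝ) (S : Finset (Fin n)) (π : Fin n → ℝ) : ℝ :=
  ∑ i, π i *
    klFin (fun y => lik (crossover p n S) (decide (i ∈ S)) y)
      (fun y => ∑ j ∈ Finset.univ.erase i,
        π j / (1 - π i) * lik (crossover p n S) (decide (j ∈ S)) y)

/-- `π̃ = 1 - 1/(1 + max{log(1/δ), log(1/ε)})` with `δ = 1/n`. -/
def piTilde (n : ℕ) (ε : ℝ) : ℝ := 1 - 1 / (1 + max (Real.log n) (Real.log (1 / ε)))

/-- Standing assumptions on the measurement-noise function `p` : on `(0,1)` it takes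
values in `(0, 1/2)`, and it is nondecreasing and continuous there. -/
def NoiseOK (p : ℝ → ℝ) : Prop :=
  (∀ x ∈ Set.Ioo (0 : ℝ) 1, p x ∈ Set.Ioo (0 : ℝ) (1 / 2)) ∧
    MonotoneOn p (Set.Ioo 0 1) ∧ ContinuousOn p (Set.Ioo 0 1)

/-- The (0-indexed) discrete interval `{i : a ≤ i < b}` as a query set. -/
def intervalFromTo (n a b : ℕ) : Finset (Fin n) :=
  Finset.univ.filter (fun i : Fin n => a ≤ (i : ℕ) ∧ (i : ℕ) < b)

/-- Total posterior mass of a set of bins. -/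
def mass (π : Fin n → ℝ) (S : Finset (Fin n)) : ℝ := ∑ i ∈ S, π i

/-- `sortPM`: sort the posterior in descending order via a permutation `σ`, pick
`k* = argmin_k |∑_{j≤k} π↓_j - 1/2|` and query the `k*` bins of largest posterior. -/
def IsSortPM (γ : (Fin n → ℝ) → Finset (Fin n)) : Prop :=
  ∀ π : Fin n → ℝ, ∃ σ : Equiv.Perm (Fin n), Antitone (fun j => π (σ j)) ∧
    ∃ k ∈ Finset.Icc 1 n,
      (∀ k' ∈ Finset.Icc 1 n,
        |(∑ j ∈ Finset.univ.filter (fun j : Fin n => (j : ℕ) < k), π (σ j)) - 1 / 2| ≤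
          |(∑ j ∈ Finset.univ.filter (fun j : Fin n => (j : ℕ) < k'), π (σ j)) - 1 / 2|) ∧
      γ π = Finset.univ.filter (fun i => ((σ.symm i : Fin n) : ℕ) < k)

/-- The hierarchical (dyadic) query set `H_l^m` (0-indexed), for resolution `2^L`. -/
def hset (n L l m : ℕ) : Finset (Fin n) :=
  intervalFromTo n (m * 2 ^ (L - l)) ((m + 1) * 2 ^ (L - l))

/-- `hiePM`: find the deepest level `l*` whose best node carries posterior mass at least
`1/2`, let `m*` be an argmax node at that level, and query, among this node and its two
children, the one whose posterior mass is closest to `1/2`. -/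
def IsHiePM (L : ℕ) (γ : (Fin n → ℝ) → Finset (Fin n)) : Prop :=
  ∀ π : Fin n → ℝ, ∃ lstar ≤ L, ∃ mstar < 2 ^ lstar,
    1 / 2 ≤ mass π (hset n L lstar mstar) ∧
    (∀ l ≤ L, ∀ m < 2 ^ l, 1 / 2 ≤ mass π (hset n L l m) → l ≤ lstar) ∧
    (∀ m < 2 ^ lstar, mass π (hset n L lstar m) ≤ mass π (hset n L lstar mstar)) ∧
    ((lstar = L ∧ γ π = hset n L L mstar) ∨
      (lstar < L ∧
        ∃ c ∈ [(lstar, mstar), (lstar + 1, 2 * mstar), (lstar + 1, 2 * mstar + 1)],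
          (∀ c' ∈ [(lstar, mstar), (lstar + 1, 2 * mstar), (lstar + 1, 2 * mstar + 1)],
            |mass π (hset n L c.1 c.2) - 1 / 2| ≤ |mass π (hset n L c'.1 c'.2) - 1 / 2|) ∧
          γ π = hset n L c.1 c.2))

/-- `dyaPM`: find the deepest level `l*` and node `m*` as in `hiePM`, then apply
posterior matching within that node: query the interval starting at the node's left
endpoint whose posterior mass is closest to `1/2`. -/
def IsDyaPM (L : ℕ) (γ : (Fin n → ℝ) → Finset (Fin n)) : Prop :=
  ∀ π : Fin n → ℝ, ∃ lstar ≤ L, ∃ mstar < 2 ^ lstar,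
    1 / 2 ≤ mass π (hset n L lstar mstar) ∧
    (∀ l ≤ L, ∀ m < 2 ^ l, 1 / 2 ≤ mass π (hset n L l m) → l ≤ lstar) ∧
    (∀ m < 2 ^ lstar, mass π (hset n L lstar m) ≤ mass π (hset n L lstar mstar)) ∧
    ∃ k ∈ Finset.Icc (mstar * 2 ^ (L - lstar) + 1) n,
      (∀ k' ∈ Finset.Icc (mstar * 2 ^ (L - lstar) + 1) n,
        |mass π (intervalFromTo n (mstar * 2 ^ (L - lstar)) k) - 1 / 2| ≤
          |mass π (intervalFromTo n (mstar * 2 ^ (L - lstar)) k') - 1 / 2|) ∧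
      γ π = intervalFromTo n (mstar * 2 ^ (L - lstar)) k

/-- `x ↦ x log(x/(1-x))`: one summand of the average log-likelihood. -/
def llr (x : ℝ) : ℝ := x * Real.log (x / (1 - x))

/-- The average log-likelihood of the vector `v` coarsely binned into `a` consecutive
bins of size `b` each. -/
def binnedU (n a b : ℕ) (v : Fin n → ℝ) : ℝ :=
  ∑ q ∈ Finset.range a, llr (∑ i ∈ intervalFromTo n (q * b) ((q + 1) * b), v i)

/-- The average log-likelihood `U(π) = ∑_i π_i log(π_i/(1-π_i))`. -/
def avgLL (π : Fin n → ℝ) : ℝ := ∑ i, llr (π i)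

/-- The Shannon entropy `H(π) = -∑_i π_i log π_i`. -/
def entropy (π : Fin n → ℝ) : ℝ := -∑ i, π i * Real.log (π i)

/-- The constant `K_s` (with `B₁ = Bern(1 - p(1/2))`, `B₀ = Bern(p(1/2))`). -/
def Ks (p : ℝ → ℝ) : ℝ :=
  max (1 / 2 * klBern (1 / 4 * (1 - p (1 / 2)) + 3 / 4 * p (1 / 2)) (p (1 / 2)))
    (1 / 8 * klBern (1 - p (1 / 2)) (3 / 4 * (1 - p (1 / 2)) + 1 / 4 * p (1 / 2)))

/-- The constant `K_h`. -/
def Kh (p : ℝ → ℝ) : ℝ :=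
  min (mutInfo (1 / 3) (p (1 / 2)))
    (2 / 3 * klBern (1 / 3 * (1 - p (1 / 2)) + 2 / 3 * p (1 / 2)) (p (1 / 2)))

/-- `f(ρ) = ρ D(B₁ ‖ (3/4)B₁ + (1/4)B₀)` where `B₁ = Bern(1-q)`, `B₀ = Bern(q)`. -/
def fK (q ρ : ℝ) : ℝ := ρ * klBern (1 - q) (3 / 4 * (1 - q) + 1 / 4 * q)

/-- `g(ρ) = (1/2-ρ) D((1-4ρ)B₁ + 4ρB₀ ‖ (1/2+ρ)B₁ + (1/2-ρ)B₀)`. -/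
def gK (q ρ : ℝ) : ℝ :=
  (1 / 2 - ρ) *
    klBern ((1 - 4 * ρ) * (1 - q) + 4 * ρ * q) ((1 / 2 + ρ) * (1 - q) + (1 / 2 - ρ) * q)

/-- The constant `K_d`. -/
def Kd (p : ℝ → ℝ) : ℝ :=
  min (sInf ((fun ρ => max (fK (p (1 / 2)) ρ) (gK (p (1 / 2)) ρ)) '' Set.Icc (0 : ℝ) (1 / 4)))
    (min (sInf (fK (p (1 / 2)) '' Set.Icc (1 / 4 : ℝ) (1 / 2)))
      (1 / 4 * klBern (1 / 4 * (1 - p (1 / 2)) + 3 / 4 * p (1 / 2)) (p (1 / 2))))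

/-- The remainder `f_{R,E}(ε,δ)` of Fact 1 (Theorem 1 of Naghshvar–Javidi). -/
def fRem (p : ℝ → ℝ) (R E δ ε : ℝ) : ℝ :=
  Real.log (Real.log (1 / (δ * ε))) / R + 1 / E + 96 / (R * E) * ((1 - p δ) / p δ) ^ 2

/-- The remainder `g_{R,E}(ε,δ)` of the total-probability lemma. -/
def gRem (p : ℝ → ℝ) (R : ℝ → ℝ) (E k₀ E₀ α δ ε : ℝ) : ℝ :=
  k₀ * Real.exp (-E₀) / ((1 - Real.exp (-E₀)) * Real.log (1 / (δ * ε)) ^ E₀) *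
      ((⌈Real.log (Real.log (1 / (δ * ε)))⌉₊ : ℝ) + Real.log (1 / δ) / R (1 / 2) +
        Real.log (1 / ε) / E + fRem p (R (1 / 2)) E δ ε) +
    k₀ * Real.exp (-2 * E₀) / ((1 - Real.exp (-E₀)) ^ 2 * Real.log (1 / (δ * ε)) ^ (2 * E₀)) +
    (⌈Real.log (Real.log (1 / (δ * ε)))⌉₊ : ℝ) + fRem p (R α) E δ ε

end

end SearchPaper

/-!
Each Bayes update multiplies the posterior by one of two likelihoods according to whether a bin
lies in the queried interval `[a, b]`, so it can only create new jumps at the cut points `a` and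
`b + 1`. After `t` interval queries the posterior is therefore a step function with at most `2t`
cut points, and the `2t + 1` sets of bins having the same number of cut points to their left
form the required partition.
-/

theorem Finset.exists_eq_Icc_of_ordConnected {α : Type*} [LinearOrder α]
    [LocallyFiniteOrder α] [Nontrivial α] {s : Finset α} (hs : (s : Set α).OrdConnected) :
    ∃ a b, s = Finset.Icc a b := by
  rcases s.eq_empty_or_nonempty with rfl | hne
  · obtain ⟨a, b, hab⟩ := exists_pair_lt α
    exact ⟨b, a, (Finset.Icc_eq_empty_of_lt hab).symm⟩
  · refine ⟨s.min' hne, s.max' hne, Finset.ext fun x => ⟨fun hx => ?_, fun hx => ?_⟩⟩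
    · exact Finset.mem_Icc.2 ⟨s.min'_le x hx, s.le_max' x hx⟩
    · exact hs.out (s.min'_mem hne) (s.max'_mem hne) (Finset.mem_Icc.1 hx)

theorem eq_sum_div_card_of_forall_mem_eq {ι : Type*} {s : Finset ι} {f : ι → ℝ} {i : ι}
    (hi : i ∈ s) (hf : ∀ j ∈ s, f j = f i) : f i = (∑ j ∈ s, f j) / s.card := by
  have hs : (s.card : ℝ) ≠ 0 := Nat.cast_ne_zero.2 (Finset.card_pos.2 ⟨i, hi⟩).ne'
  rw [Finset.sum_congr rfl hf, Finset.sum_const, nsmul_eq_mul, mul_div_cancel_left₀ _ hs]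

namespace SearchPaper

open Finset

section CellIndex

variable {α : Type*} [LinearOrder α] (E : Finset α)

def cellIndex (x : α) : ℕ := #(E.filter (· ≤ x))

theorem cellIndex_mono : Monotone (cellIndex E) := fun _ _ hxy =>
  card_le_card (monotone_filter_right E fun _ _ h => h.trans hxy)

theorem cellIndex_le_card (x : α) : cellIndex E x ≤ #E := card_filter_le _ _

theorem le_iff_le_of_cellIndex_eq {x y : α} (h : cellIndex E x = cellIndex E y) {e : α}
    (he : e ∈ E) : e ≤ x ↔ e ≤ y := by
  wlog hxy : x ≤ y generalizing x y
  · exact (this h.symm (le_of_not_ge hxy)).symm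
  have hsub : E.filter (· ≤ x) ⊆ E.filter (· ≤ y) :=
    monotone_filter_right E fun _ _ h => h.trans hxy
  have heq := eq_of_subset_of_card_le hsub h.ge
  refine ⟨fun hex => hex.trans hxy, fun hey => ?_⟩
  have : e ∈ E.filter (· ≤ x) := heq ▸ mem_filter.2 ⟨he, hey⟩
  exact (mem_filter.1 this).2

end CellIndex

variable {n : ℕ}

def IsStepFunction {β : Type*} (E : Finset ℕ) (f : Fin n → β) : Prop :=
  ∀ i j : Fin n, (∀ e ∈ E, e ≤ (i : ℕ) ↔ e ≤ (j : ℕ)) → f i = f j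

theorem isStepFunction_const {β : Type*} (E : Finset ℕ) (c : β) :
    IsStepFunction E (fun _ : Fin n => c) := fun _ _ _ => rfl

theorem IsStepFunction.bayesUpdate {E : Finset ℕ} {π : Fin n → ℝ} (hπ : IsStepFunction E π)
    (p : ℝ → ℝ) (a b : Fin n) (y : Bool) :
    IsStepFunction (insert (a : ℕ) (insert ((b : ℕ) + 1) E))
      (SearchPaper.bayesUpdate p (Icc a b) π y) := by
  intro i j hij
  simp only [mem_insert, forall_eq_or_imp] at hij
  obtain ⟨ha, hb, hE⟩ := hij
  have hmem : i ∈ Icc a b ↔ j ∈ Icc a b := by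
    simp only [mem_Icc, Fin.le_def]
    omega
  unfold SearchPaper.bayesUpdate
  rw [hπ i j hE, decide_eq_decide.2 hmem]

theorem exists_isStepFunction_posteriorSeq (p : ℝ → ℝ) (S : ℕ → Finset (Fin n))
    (y : ℕ → Bool) (t : ℕ) (hS : ∀ s < t, ∃ a b : Fin n, S s = Icc a b) :
    ∃ E : Finset ℕ, #E ≤ 2 * t ∧ IsStepFunction E (posteriorSeq p S y t) := by
  induction t with
  | zero => exact ⟨∅, by simp, isStepFunction_const _ _⟩
  | succ t ih =>
    obtain ⟨E, hcard, hE⟩ := ih fun s hs => hS s (by omega)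
    obtain ⟨a, b, hab⟩ := hS t (by omega)
    refine ⟨insert (a : ℕ) (insert ((b : ℕ) + 1) E), ?_, ?_⟩
    · grw [card_insert_le, card_insert_le]
      omega
    · rw [posteriorSeq, hab]
      exact hE.bayesUpdate p a b (y t)

def cell (E : Finset ℕ) (u : ℕ) : Finset (Fin n) :=
  univ.filter fun i => cellIndex E (i : ℕ) = u

theorem mem_cell_cellIndex (E : Finset ℕ) (i : Fin n) : i ∈ cell E (cellIndex E (i : ℕ)) := by
  simp [cell]

theorem cell_ordConnected (E : Finset ℕ) (u : ℕ) :
    ((cell E u : Finset (Fin n)) : Set (Fin n)).OrdConnected := by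
  refine ⟨fun i hi j hj k hk => ?_⟩
  simp only [cell, coe_filter, mem_univ, true_and, Set.mem_ofPred_eq] at hi hj ⊢
  have h₁ := cellIndex_mono E (Fin.le_def.1 hk.1)
  have h₂ := cellIndex_mono E (Fin.le_def.1 hk.2)
  omega

theorem disjoint_cell (E : Finset ℕ) {u v : ℕ} (huv : u ≠ v) :
    Disjoint (cell E u : Finset (Fin n)) (cell E v) :=
  disjoint_filter.2 fun _ _ hu hv => huv (hu.symm.trans hv)

theorem IsStepFunction.eq_of_mem_cell {β : Type*} {E : Finset ℕ} {f : Fin n → β}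
    (hf : IsStepFunction E f) {u : ℕ} {i j : Fin n} (hi : i ∈ cell E u) (hj : j ∈ cell E u) :
    f i = f j := by
  simp only [cell, mem_filter, mem_univ, true_and] at hi hj
  exact hf i j fun e he => le_iff_le_of_cellIndex_eq E (hi.trans hj.symm) he

end SearchPaper

theorem statement0_general (n : ℕ) (hn : 2 ≤ n) (p : ℝ → ℝ)
    (S : ℕ → Finset (Fin n)) (y : ℕ → Bool) (t : ℕ)
    (hS : ∀ s < t, ∃ a b : Fin n, S s = Finset.Icc a b) :
    ∃ J : Fin (2 * t + 1) → Finset (Fin n),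
      (∀ u, ∃ a b : Fin n, J u = Finset.Icc a b) ∧
      (∀ u v, u ≠ v → Disjoint (J u) (J v)) ∧
      (∀ i : Fin n, ∃ u, i ∈ J u) ∧
      (∀ u, ∀ i ∈ J u,
        SearchPaper.posteriorSeq p S y t i =
          (∑ j ∈ J u, SearchPaper.posteriorSeq p S y t j) / ((J u).card : ℝ)) := by
  obtain ⟨E, hcard, hstep⟩ := SearchPaper.exists_isStepFunction_posteriorSeq p S y t hS
  have : Nontrivial (Fin n) := Fin.nontrivial_iff_two_le.2 hn
  refine ⟨fun u => SearchPaper.cell E u,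
    fun u => Finset.exists_eq_Icc_of_ordConnected (SearchPaper.cell_ordConnected E u),
    fun u v huv => SearchPaper.disjoint_cell E (Fin.val_injective.ne huv), fun i => ?_,
    fun u i hi => eq_sum_div_card_of_forall_mem_eq hi fun j hj => hstep.eq_of_mem_cell hj hi⟩
  have := SearchPaper.cellIndex_le_card E (i : ℕ)
  exact ⟨⟨SearchPaper.cellIndex E i, by omega⟩, SearchPaper.mem_cell_cellIndex E i⟩

/-- Lemma 1 in the paper. If the query sets `S 0, ..., S (t-1)` are all
contiguous intervals of `{1, ..., 1/δ}` and the prior is uniform, then the Bayesian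
posterior at time `t` is a simple function with at most `2t+1` intervals: there is a
partition of the bins into disjoint contiguous intervals `J 0, ..., J (2t)` on each of
which the posterior is constant, equal to the average posterior mass of the interval. -/
theorem statement0 (n : ℕ) (hn : 2 ≤ n) (p : ℝ → ℝ) (hp : SearchPaper.NoiseOK p)
    (S : ℕ → Finset (Fin n)) (y : ℕ → Bool) (t : ℕ)
    (hS : ∀ s < t, ∃ a b : Fin n, S s = Finset.Icc a b) :
    ∃ J : Fin (2 * t + 1) → Finset (Fin n),
      (∀ u, ∃ a b : Fin n, J u = Finset.Icc a b) ∧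
      (∀ u v, u ≠ v → Disjoint (J u) (J v)) ∧
      (∀ i : Fin n, ∃ u, i ∈ J u) ∧
      (∀ u, ∀ i ∈ J u,
        SearchPaper.posteriorSeq p S y t i =
          (∑ j ∈ J u, SearchPaper.posteriorSeq p S y t j) / ((J u).card : ℝ)) :=
  statement0_general n hn p S y t hS
end

section
/- Under either the sortPM or the dyaPM strategy with resolution 1/δ and reliability ε, for every time t the Extrinsic Jensen–Shannon divergence satisfies EJS(π(t), γ) ≥ I(1/2, p(δ|S_{t+1}|)), and whenever max_i π_i(t) ≥ π̃ it satisfies EJS(π(t), γ) ≥ π̃·C₁(p(δ)), where π̃ = 1 − 1/(1 + max{log(1/δ), log(1/ε)}). -/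
open MeasureTheory Filter

/-!
Each summand of `EJS` is `π i · D(Bern a_i ‖ Bern s_i)` with `a_i = P(Y = 1 | θ = i)` and
`s_i = P(Y = 1 | θ ≠ i)`. Bounding `D(Bern a ‖ ·)` below by its tangent at `1/2` gives
`EJS ≥ I(1/2, p) + (1 - 2p)² · W` with `q = π(S)` and
`W = (2 - 2q) ∑_{i ∈ S} π_i²/(1 - π_i) + 2q ∑_{i ∉ S} π_i²/(1 - π_i) - (1 - 2q)²`.
Both strategies query a prefix of an enumeration of bins whose mass is closest to `1/2`, so the
last bin taken (if `q ≥ 1/2`) or the first bin left out (if `q ≤ 1/2`) has mass at least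
`|2q - 1|`; as `x ↦ x²/(1 - x)` is increasing, that bin alone makes `W ≥ 0`.
Once `max_i π_i ≥ π̃` some bin has mass `≥ 1/2` (for `n ≥ 3` because then `π̃ ≥ 1/2`), and
matching then queries exactly that maximal bin `s`, whose summand of `EJS` is `π_s · C₁(p(δ))`.
-/

namespace SearchPaper

open Finset

lemma sub_le_mul_log_div {a b : ℝ} (ha : 0 < a) (hb : 0 < b) :
    a - b ≤ a * Real.log (a / b) := by
  have h := Real.one_sub_inv_le_log_of_pos (div_pos ha hb)
  rw [inv_div] at h
  calc a - b = a * (1 - b / a) := by field_simp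
    _ ≤ a * Real.log (a / b) := mul_le_mul_of_nonneg_left h ha.le

lemma klBern_nonneg {a b : ℝ} (ha0 : 0 < a) (ha1 : a < 1) (hb0 : 0 < b) (hb1 : b < 1) :
    0 ≤ klBern a b := by
  have h₁ := sub_le_mul_log_div ha0 hb0
  have h₂ := sub_le_mul_log_div (sub_pos.2 ha1) (sub_pos.2 hb1)
  unfold klBern
  linarith

/-- The tangent line of the convex function `s ↦ D(Bern a ‖ Bern s)` at `s = 1/2`. -/
lemma klBern_half_add_le {a s : ℝ} (ha0 : 0 < a) (ha1 : a < 1) (hs0 : 0 < s) (hs1 : s < 1) :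
    klBern a (1 / 2) + (1 - 2 * s) * (2 * a - 1) ≤ klBern a s := by
  have ha1' := sub_pos.2 ha1
  have hs1' := sub_pos.2 hs1
  have h₁ := sub_le_mul_log_div ha0 (by positivity : (0 : ℝ) < 2 * a * s)
  have h₂ := sub_le_mul_log_div ha1' (by positivity : (0 : ℝ) < 2 * (1 - a) * (1 - s))
  have e₁ : a / (2 * a * s) = a / s / (a / (1 / 2)) := by field_simp
  have e₂ : (1 - a) / (2 * (1 - a) * (1 - s)) =
      (1 - a) / (1 - s) / ((1 - a) / (1 - 1 / 2)) := by
    field_simp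
    ring
  rw [e₁, Real.log_div (by positivity) (by positivity)] at h₁
  rw [e₂, Real.log_div (by positivity) (by positivity)] at h₂
  unfold klBern
  linarith

lemma klBern_one_sub_half (x : ℝ) : klBern (1 - x) (1 / 2) = klBern x (1 / 2) := by
  unfold klBern
  ring_nf

lemma mutInfo_half (x : ℝ) : mutInfo (1 / 2) x = klBern x (1 / 2) := by
  unfold mutInfo
  rw [show (1 : ℝ) / 2 * (1 - x) + (1 - 1 / 2) * x = 1 / 2 by ring, klBern_one_sub_half]
  ring

lemma klBern_one_sub_self (x : ℝ) : klBern (1 - x) x = C1 x := by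
  unfold C1 klBern
  ring_nf

lemma C1_nonneg {x : ℝ} (hx0 : 0 < x) (hx1 : x < 1) : 0 ≤ C1 x :=
  klBern_nonneg hx0 hx1 (by linarith) (by linarith)

variable {n : ℕ}

lemma apply_lt_one_of_sum_eq_one (hn : 2 ≤ n) {π : Fin n → ℝ} (hpos : ∀ i, 0 < π i)
    (hsum : ∑ i, π i = 1) (i : Fin n) : π i < 1 := by
  obtain ⟨j, hj⟩ := Fintype.exists_ne_of_one_lt_card (by simp; omega) i
  rw [← hsum]
  exact single_lt_sum hj (mem_univ i) (mem_univ j) (hpos j) fun k _ _ => (hpos k).le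

lemma lik_pos {c : ℝ} (h0 : 0 < c) (h1 : c < 1) (x y : Bool) : 0 < lik c x y := by
  unfold lik; split <;> linarith

lemma lik_lt_one {c : ℝ} (h0 : 0 < c) (h1 : c < 1) (x y : Bool) : lik c x y < 1 := by
  unfold lik; split <;> linarith

lemma lik_false (c : ℝ) (x : Bool) : lik c x false = 1 - lik c x true := by
  cases x <;> simp [lik]

lemma lik_true_of_mem {c : ℝ} {S : Finset (Fin n)} {i : Fin n} (hi : i ∈ S) :
    lik c (decide (i ∈ S)) true = 1 - c := by
  simp [lik, hi]

lemma lik_true_of_notMem {c : ℝ} {S : Finset (Fin n)} {i : Fin n} (hi : i ∉ S) :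
    lik c (decide (i ∈ S)) true = c := by
  simp [lik, hi]

lemma sum_mul_lik_true (c : ℝ) (S : Finset (Fin n)) {π : Fin n → ℝ} (hsum : ∑ i, π i = 1) :
    ∑ j, π j * lik c (decide (j ∈ S)) true = c + mass π S * (1 - 2 * c) := by
  have h : ∀ j, π j * lik c (decide (j ∈ S)) true =
      c * π j + (1 - 2 * c) * (if j ∈ S then π j else 0) := by
    intro j
    by_cases hj : j ∈ S <;> simp [lik, hj] <;> ring
  rw [sum_congr rfl fun j _ => h j, sum_add_distrib, ← mul_sum, ← mul_sum, hsum, sum_ite_mem,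
    univ_inter, mass]
  ring

/-- `P_{1|≠i,S}`: the probability of observing `1` when the target is not `i`. -/
noncomputable def extrinsicProb (c : ℝ) (S : Finset (Fin n)) (π : Fin n → ℝ) (i : Fin n) :
    ℝ :=
  (∑ j ∈ univ.erase i, π j * lik c (decide (j ∈ S)) true) / (1 - π i)

lemma one_sub_mul_extrinsicProb (c : ℝ) (S : Finset (Fin n)) {π : Fin n → ℝ}
    (hsum : ∑ i, π i = 1) {i : Fin n} (hi : π i < 1) :
    (1 - π i) * extrinsicProb c S π i =
      c + mass π S * (1 - 2 * c) - π i * lik c (decide (i ∈ S)) true := by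
  rw [extrinsicProb, mul_div_cancel₀ _ (sub_pos.2 hi).ne', sum_erase_eq_sub (mem_univ i),
    sum_mul_lik_true c S hsum]

lemma extrinsicProb_mem_Ioo (hn : 2 ≤ n) {c : ℝ} (hc0 : 0 < c) (hc1 : c < 1)
    (S : Finset (Fin n)) {π : Fin n → ℝ} (hpos : ∀ i, 0 < π i) (hsum : ∑ i, π i = 1)
    (i : Fin n) : extrinsicProb c S π i ∈ Set.Ioo 0 1 := by
  have hi := sub_pos.2 (apply_lt_one_of_sum_eq_one hn hpos hsum i)
  obtain ⟨j, hj⟩ := Fintype.exists_ne_of_one_lt_card (by simp; omega) i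
  have hne : (univ.erase i).Nonempty := ⟨j, mem_erase.2 ⟨hj, mem_univ j⟩⟩
  rw [extrinsicProb]
  refine ⟨div_pos (sum_pos (fun k _ => mul_pos (hpos k) (lik_pos hc0 hc1 _ _)) hne) hi, ?_⟩
  rw [div_lt_one hi, ← hsum, ← sum_erase_eq_sub (mem_univ i)]
  refine sum_lt_sum_of_nonempty hne fun k _ => ?_
  simpa using mul_lt_mul_of_pos_left (lik_lt_one hc0 hc1 (decide (k ∈ S)) true) (hpos k)

lemma EJS_eq_sum_klBern (p : ℝ → ℝ) (S : Finset (Fin n)) {π : Fin n → ℝ}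
    (hsum : ∑ i, π i = 1) (hlt : ∀ i, π i < 1) :
    EJS p S π = ∑ i, π i * klBern (lik (crossover p n S) (decide (i ∈ S)) true)
      (extrinsicProb (crossover p n S) S π i) := by
  set c := crossover p n S
  refine sum_congr rfl fun i _ => congrArg (π i * ·) ?_
  have htrue : ∑ j ∈ univ.erase i, π j / (1 - π i) * lik c (decide (j ∈ S)) true =
      extrinsicProb c S π i := by
    rw [extrinsicProb, sum_div]
    exact sum_congr rfl fun j _ => by ring
  have hfalse : ∑ j ∈ univ.erase i, π j / (1 - π i) * lik c (decide (j ∈ S)) false =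
      1 - extrinsicProb c S π i := by
    simp_rw [lik_false, mul_one_sub, sum_sub_distrib, htrue, ← sum_div,
      sum_erase_eq_sub (mem_univ i), hsum, div_self (sub_pos.2 (hlt i)).ne']
  rw [klFin, Fintype.sum_bool, htrue, hfalse, lik_false, klBern]

lemma sq_le_one_sub_mul_sq_div {u x : ℝ} (hu : 0 ≤ u) (hux : u ≤ x) (hx : x < 1) :
    u ^ 2 ≤ (1 - u) * (x ^ 2 / (1 - x)) := by
  rw [mul_div_assoc', le_div_iff₀ (sub_pos.2 hx)]
  -- `(1 - u) x² - u² (1 - x) = (x - u) (x + u (1 - x))`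
  nlinarith [mul_nonneg (sub_nonneg.2 hux)
    (add_nonneg (hu.trans hux) (mul_nonneg hu (sub_pos.2 hx).le))]

/-- Up to the factor `(1 - 2c)²`, the tangent bound's lower estimate for the excess of the
`i`-th summand of `EJS` over `π i * I(1/2, c)`. -/
noncomputable def pivotWeight (π : Fin n → ℝ) (S : Finset (Fin n)) (i : Fin n) : ℝ :=
  π i * (π i + if i ∈ S then 1 - 2 * mass π S else 2 * mass π S - 1) / (1 - π i)

lemma sum_pivotWeight {π : Fin n → ℝ} (S : Finset (Fin n)) (hsum : ∑ i, π i = 1)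
    (hlt : ∀ i, π i < 1) :
    ∑ i, pivotWeight π S i =
      (2 - 2 * mass π S) * ∑ i ∈ S, π i ^ 2 / (1 - π i) +
        2 * mass π S * ∑ i ∈ Sᶜ, π i ^ 2 / (1 - π i) - (1 - 2 * mass π S) ^ 2 := by
  set q := mass π S
  have hq : ∑ i ∈ S, π i = q := rfl
  have hcompl : ∑ i ∈ Sᶜ, π i = 1 - q := by
    linarith [sum_add_sum_compl S π]
  have hS : ∑ i ∈ S, pivotWeight π S i =
      ∑ i ∈ S, ((2 - 2 * q) * (π i ^ 2 / (1 - π i)) + (1 - 2 * q) * π i) := by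
    refine sum_congr rfl fun i hi => ?_
    have := (sub_pos.2 (hlt i)).ne'
    rw [pivotWeight, if_pos hi]
    field_simp
    ring
  have hSc : ∑ i ∈ Sᶜ, pivotWeight π S i =
      ∑ i ∈ Sᶜ, (2 * q * (π i ^ 2 / (1 - π i)) - (1 - 2 * q) * π i) := by
    refine sum_congr rfl fun i hi => ?_
    have := (sub_pos.2 (hlt i)).ne'
    rw [pivotWeight, if_neg (mem_compl.1 hi)]
    field_simp
    ring
  rw [← sum_add_sum_compl S, hS, hSc, sum_add_distrib, sum_sub_distrib, ← mul_sum, ← mul_sum,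
    ← mul_sum, ← mul_sum, hq, hcompl]
  ring

lemma sum_pivotWeight_nonneg {π : Fin n → ℝ} {S : Finset (Fin n)} (hsum : ∑ i, π i = 1)
    (hlt : ∀ i, π i < 1)
    (hmem : 1 / 2 ≤ mass π S → ∃ i ∈ S, 2 * mass π S - 1 ≤ π i)
    (hnotMem : mass π S ≤ 1 / 2 → ∃ j ∉ S, 1 - 2 * mass π S ≤ π j) :
    0 ≤ ∑ i, pivotWeight π S i := by
  rw [sum_pivotWeight S hsum hlt]
  set q := mass π S
  have hterm : ∀ i, 0 ≤ π i ^ 2 / (1 - π i) := fun i =>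
    div_nonneg (sq_nonneg _) (sub_pos.2 (hlt i)).le
  have hsingle : ∀ T : Finset (Fin n), ∀ i ∈ T,
      π i ^ 2 / (1 - π i) ≤ ∑ j ∈ T, π j ^ 2 / (1 - π j) :=
    fun T i hi => single_le_sum (fun j _ => hterm j) hi
  rcases le_total (1 / 2) q with hq | hq
  · obtain ⟨i, hi, hpi⟩ := hmem hq
    have hu := sq_le_one_sub_mul_sq_div (by linarith) hpi (hlt i)
    have hq1 : q < 1 := by linarith [hlt i]
    nlinarith [mul_le_mul_of_nonneg_left (hsingle S i hi) (by linarith : (0 : ℝ) ≤ 2 - 2 * q),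
      mul_nonneg (by linarith : (0 : ℝ) ≤ 2 * q) (sum_nonneg fun j (_ : j ∈ Sᶜ) => hterm j)]
  · obtain ⟨j, hj, hpj⟩ := hnotMem hq
    have hu := sq_le_one_sub_mul_sq_div (by linarith) hpj (hlt j)
    have hq0 : 0 < q := by linarith [hlt j]
    nlinarith [mul_le_mul_of_nonneg_left (hsingle Sᶜ j (mem_compl.2 hj))
        (by linarith : (0 : ℝ) ≤ 2 * q),
      mul_nonneg (by linarith : (0 : ℝ) ≤ 2 - 2 * q) (sum_nonneg fun i (_ : i ∈ S) => hterm i)]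

lemma mul_klBern_half_add_pivotWeight_le (hn : 2 ≤ n) {c : ℝ} (hc0 : 0 < c) (hc1 : c < 1)
    (S : Finset (Fin n)) {π : Fin n → ℝ} (hpos : ∀ i, 0 < π i) (hsum : ∑ i, π i = 1)
    (i : Fin n) :
    π i * klBern c (1 / 2) + (1 - 2 * c) ^ 2 * pivotWeight π S i ≤
      π i * klBern (lik c (decide (i ∈ S)) true) (extrinsicProb c S π i) := by
  have hlt := apply_lt_one_of_sum_eq_one hn hpos hsum i
  have hne := (sub_pos.2 hlt).ne'
  obtain ⟨hs0, hs1⟩ := extrinsicProb_mem_Ioo hn hc0 hc1 S hpos hsum i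
  have hs := one_sub_mul_extrinsicProb c S hsum hlt
  set s := extrinsicProb c S π i
  have htangent := klBern_half_add_le (lik_pos hc0 hc1 (decide (i ∈ S)) true)
    (lik_lt_one hc0 hc1 (decide (i ∈ S)) true) hs0 hs1
  have hweight : (1 - 2 * c) ^ 2 * pivotWeight π S i =
      π i * ((1 - 2 * s) * (2 * lik c (decide (i ∈ S)) true - 1)) := by
    by_cases hi : i ∈ S
    · rw [lik_true_of_mem hi] at hs ⊢
      rw [pivotWeight, if_pos hi]
      field_simp
      linear_combination (2 * π i * (1 - 2 * c)) * hs
    · rw [lik_true_of_notMem hi] at hs ⊢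
      rw [pivotWeight, if_neg hi]
      field_simp
      linear_combination (-2 * π i * (1 - 2 * c)) * hs
  have hhalf : klBern (lik c (decide (i ∈ S)) true) (1 / 2) = klBern c (1 / 2) := by
    by_cases hi : i ∈ S
    · rw [lik_true_of_mem hi, klBern_one_sub_half]
    · rw [lik_true_of_notMem hi]
  rw [hhalf] at htangent
  rw [hweight, ← mul_add]
  exact mul_le_mul_of_nonneg_left htangent (hpos i).le

theorem mutInfo_half_le_EJS (hn : 2 ≤ n) (p : ℝ → ℝ) {S : Finset (Fin n)} {π : Fin n → ℝ}
    (hpos : ∀ i, 0 < π i) (hsum : ∑ i, π i = 1)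
    (hc0 : 0 < crossover p n S) (hc1 : crossover p n S < 1)
    (hmem : 1 / 2 ≤ mass π S → ∃ i ∈ S, 2 * mass π S - 1 ≤ π i)
    (hnotMem : mass π S ≤ 1 / 2 → ∃ j ∉ S, 1 - 2 * mass π S ≤ π j) :
    mutInfo (1 / 2) (crossover p n S) ≤ EJS p S π := by
  set c := crossover p n S
  have hlt := apply_lt_one_of_sum_eq_one hn hpos hsum
  have hw := sum_pivotWeight_nonneg hsum hlt hmem hnotMem
  calc mutInfo (1 / 2) c
      ≤ ∑ i, π i * klBern c (1 / 2) + (1 - 2 * c) ^ 2 * ∑ i, pivotWeight π S i := by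
        rw [← sum_mul, hsum, mutInfo_half, one_mul]
        exact le_add_of_nonneg_right (mul_nonneg (sq_nonneg _) hw)
    _ = ∑ i, (π i * klBern c (1 / 2) + (1 - 2 * c) ^ 2 * pivotWeight π S i) := by
        rw [sum_add_distrib, mul_sum]
    _ ≤ ∑ i, π i * klBern (lik c (decide (i ∈ S)) true) (extrinsicProb c S π i) :=
        sum_le_sum fun i _ => mul_klBern_half_add_pivotWeight_le hn hc0 hc1 S hpos hsum i
    _ = EJS p S π := (EJS_eq_sum_klBern p S hsum hlt).symm

lemma crossover_singleton (p : ℝ → ℝ) (s : Fin n) : crossover p n {s} = p (n : ℝ)⁻¹ := by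
  simp [crossover, one_div]

theorem mul_C1_le_EJS_singleton (hn : 2 ≤ n) (p : ℝ → ℝ) (s : Fin n) {π : Fin n → ℝ}
    (hpos : ∀ i, 0 < π i) (hsum : ∑ i, π i = 1)
    (hc0 : 0 < p (n : ℝ)⁻¹) (hc1 : p (n : ℝ)⁻¹ < 1) :
    π s * C1 (p (n : ℝ)⁻¹) ≤ EJS p {s} π := by
  rw [← crossover_singleton p s] at hc0 hc1 ⊢
  set c := crossover p n {s}
  have hlt := apply_lt_one_of_sum_eq_one hn hpos hsum
  have hs : extrinsicProb c {s} π s = c := by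
    have h := one_sub_mul_extrinsicProb c {s} hsum (hlt s)
    rw [mass, sum_singleton, lik_true_of_mem (mem_singleton_self s)] at h
    exact mul_left_cancel₀ (sub_pos.2 (hlt s)).ne' (h.trans (by ring))
  rw [EJS_eq_sum_klBern p {s} hsum hlt]
  refine Eq.trans_le ?_ (single_le_sum (fun i _ => mul_nonneg (hpos i).le ?_) (mem_univ s))
  · rw [hs, lik_true_of_mem (mem_singleton_self s), klBern_one_sub_self]
  · obtain ⟨h0, h1⟩ := extrinsicProb_mem_Ioo hn hc0 hc1 {s} hpos hsum i
    exact klBern_nonneg (lik_pos hc0 hc1 _ _) (lik_lt_one hc0 hc1 _ _) h0 h1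

lemma obsProb_pos [NeZero n] (p : ℝ → ℝ) {S : Finset (Fin n)} {π : Fin n → ℝ}
    (hc0 : 0 < crossover p n S) (hc1 : crossover p n S < 1) (hpos : ∀ i, 0 < π i) (y : Bool) :
    0 < obsProb p S π y :=
  sum_pos (fun i _ => mul_pos (hpos i) (lik_pos hc0 hc1 _ _)) univ_nonempty

lemma posterior_pos_and_sum_eq_one [NeZero n] (p : ℝ → ℝ) {γ : (Fin n → ℝ) → Finset (Fin n)}
    (hγ : ∀ π : Fin n → ℝ, (∀ i, 0 < π i) → ∑ i, π i = 1 →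
      crossover p n (γ π) ∈ Set.Ioo 0 1)
    (y : ℕ → Bool) : ∀ t, (∀ i, 0 < posterior p γ y t i) ∧ ∑ i, posterior p γ y t i = 1
  | 0 => by
    have : (n : ℝ) ≠ 0 := Nat.cast_ne_zero.2 (NeZero.ne n)
    refine ⟨fun _ => by simp [posterior, NeZero.pos n], ?_⟩
    simp [posterior, this]
  | t + 1 => by
    obtain ⟨hpos, hsum⟩ := posterior_pos_and_sum_eq_one p hγ y t
    obtain ⟨hc0, hc1⟩ := hγ _ hpos hsum
    have hobs := obsProb_pos p hc0 hc1 hpos (y t)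
    refine ⟨fun i => div_pos (mul_pos (hpos i) (lik_pos hc0 hc1 _ _)) hobs, ?_⟩
    simp only [posterior, bayesUpdate]
    rw [← sum_div]
    exact div_self hobs.ne'

lemma mass_mono {π : Fin n → ℝ} (hpos : ∀ i, 0 < π i) {S T : Finset (Fin n)} (h : S ⊆ T) :
    mass π S ≤ mass π T :=
  sum_le_sum_of_subset_of_nonneg h fun i _ _ => (hpos i).le

lemma mass_univ {π : Fin n → ℝ} (hsum : ∑ i, π i = 1) : mass π univ = 1 := hsum

/-- The properties of a posterior-matching query `S` at the posterior `π` that the EJS bounds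
rely on. -/
structure IsPMQuery (π : Fin n → ℝ) (S : Finset (Fin n)) : Prop where
  nonempty : S.Nonempty
  ne_univ : S ≠ univ
  exists_mem_le : 1 / 2 ≤ mass π S → ∃ i ∈ S, 2 * mass π S - 1 ≤ π i
  exists_notMem_le : mass π S ≤ 1 / 2 → ∃ j ∉ S, 1 - 2 * mass π S ≤ π j
  eq_singleton : (∃ i, 1 / 2 ≤ π i) → ∃ s, S = {s} ∧ ∀ i, π i ≤ π s

lemma IsPMQuery.crossover_mem_Ioo {p : ℝ → ℝ} (hp : NoiseOK p) {π : Fin n → ℝ}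
    {S : Finset (Fin n)} (h : IsPMQuery π S) : crossover p n S ∈ Set.Ioo 0 (1 / 2) := by
  have hcard : S.card < n := by simpa using (card_lt_iff_ne_univ S).2 h.ne_univ
  have hn : (0 : ℝ) < n := by exact_mod_cast (h.nonempty.card_pos.trans hcard)
  refine hp.1 _ ⟨div_pos (by exact_mod_cast h.nonempty.card_pos) hn, ?_⟩
  rw [div_lt_one hn]
  exact_mod_cast hcard

lemma add_le_one_of_abs_sub_half_le {x y : ℝ} (hxy : x < y) (h : |y - 1 / 2| ≤ |x - 1 / 2|) :
    x + y ≤ 1 := by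
  cases abs_cases (x - 1 / 2) <;> cases abs_cases (y - 1 / 2) <;> linarith

lemma one_le_add_of_abs_sub_half_le {x y : ℝ} (hxy : x < y) (h : |x - 1 / 2| ≤ |y - 1 / 2|) :
    1 ≤ x + y := by
  cases abs_cases (x - 1 / 2) <;> cases abs_cases (y - 1 / 2) <;> linarith

section Prefix

variable {N : ℕ}

def prefixSet (e : Fin N ↪ Fin n) (k : ℕ) : Finset (Fin n) :=
  (univ.filter fun j : Fin N => (j : ℕ) < k).map e

lemma mem_prefixSet {e : Fin N ↪ Fin n} {k : ℕ} {j : Fin N} :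
    e j ∈ prefixSet e k ↔ (j : ℕ) < k := by
  simp [prefixSet]

lemma mass_prefixSet (π : Fin n → ℝ) (e : Fin N ↪ Fin n) (k : ℕ) :
    mass π (prefixSet e k) = ∑ j ∈ univ.filter (fun j : Fin N => (j : ℕ) < k), π (e j) :=
  sum_map _ _ _

lemma mass_prefixSet_zero (π : Fin n → ℝ) (e : Fin N ↪ Fin n) :
    mass π (prefixSet e 0) = 0 := by
  simp [mass_prefixSet]

lemma mass_prefixSet_succ (π : Fin n → ℝ) (e : Fin N ↪ Fin n) {k : ℕ} (hk : k < N) :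
    mass π (prefixSet e (k + 1)) = mass π (prefixSet e k) + π (e ⟨k, hk⟩) := by
  have h : univ.filter (fun j : Fin N => (j : ℕ) < k + 1) =
      insert ⟨k, hk⟩ (univ.filter fun j : Fin N => (j : ℕ) < k) := by
    ext j
    simp only [mem_filter, mem_univ, true_and, mem_insert, Fin.ext_iff]
    omega
  rw [mass_prefixSet, mass_prefixSet, h, sum_insert (by simp), add_comm]

lemma mass_prefixSet_mono {π : Fin n → ℝ} (hpos : ∀ i, 0 < π i) (e : Fin N ↪ Fin n) :
    Monotone fun k => mass π (prefixSet e k) :=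
  fun _ _ hkk' => mass_mono hpos <| map_subset_map.2 fun j => by
    simp only [mem_filter, mem_univ, true_and]
    omega

/-- Posterior matching along the enumeration `e` of (some of) the bins. -/
def IsPrefixMatch (π : Fin n → ℝ) (e : Fin N ↪ Fin n) (k : ℕ) : Prop :=
  k ∈ Icc 1 N ∧ ∀ k' ∈ Icc 1 N,
    |mass π (prefixSet e k) - 1 / 2| ≤ |mass π (prefixSet e k') - 1 / 2|

variable {π : Fin n → ℝ} {e : Fin N ↪ Fin n} {k : ℕ}

lemma IsPrefixMatch.abs_sub_half_le (hpos : ∀ i, 0 < π i) (hsum : ∑ i, π i = 1)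
    (h : IsPrefixMatch π e k) {k' : ℕ} (hk' : k' ≤ N) :
    |mass π (prefixSet e k) - 1 / 2| ≤ |mass π (prefixSet e k') - 1 / 2| := by
  rcases Nat.eq_zero_or_pos k' with rfl | hk'0
  · have h0 : mass π (prefixSet e 0) ≤ mass π (prefixSet e k) :=
      mass_prefixSet_mono hpos e (Nat.zero_le k)
    have h1 := (mass_mono hpos (subset_univ (prefixSet e k))).trans_eq (mass_univ hsum)
    rw [mass_prefixSet_zero] at h0 ⊢
    rw [zero_sub, abs_neg, abs_of_pos (by norm_num : (0 : ℝ) < 1 / 2), abs_le]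
    constructor <;> linarith
  · exact h.2 k' (mem_Icc.2 ⟨hk'0, hk'⟩)

lemma IsPrefixMatch.ne_univ (hn : 2 ≤ n) (hpos : ∀ i, 0 < π i) (hsum : ∑ i, π i = 1)
    (h : IsPrefixMatch π e k) : prefixSet e k ≠ univ := by
  intro hU
  obtain ⟨hk, hmin⟩ := h
  obtain ⟨hk1, hkN⟩ := mem_Icc.1 hk
  have h1 := hmin 1 (mem_Icc.2 ⟨le_rfl, hk1.trans hkN⟩)
  rw [hU, mass_univ hsum, mass_prefixSet_succ π e (by omega : 0 < N), mass_prefixSet_zero,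
    zero_add] at h1
  have hlt := apply_lt_one_of_sum_eq_one hn hpos hsum (e ⟨0, by omega⟩)
  have hlt' : |π (e ⟨0, by omega⟩) - 1 / 2| < 1 / 2 := by
    rw [abs_lt]
    constructor <;> linarith [hpos (e ⟨0, by omega⟩)]
  rw [show |(1 : ℝ) - 1 / 2| = 1 / 2 by norm_num] at h1
  linarith

lemma IsPrefixMatch.exists_mem_le (hpos : ∀ i, 0 < π i) (hsum : ∑ i, π i = 1)
    (h : IsPrefixMatch π e k) :
    ∃ i ∈ prefixSet e k, 2 * mass π (prefixSet e k) - 1 ≤ π i := by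
  obtain ⟨hk1, hkN⟩ := mem_Icc.1 h.1
  have hk : k - 1 < N := by omega
  have hstep := mass_prefixSet_succ π e hk
  rw [Nat.sub_add_cancel hk1] at hstep
  refine ⟨e ⟨k - 1, hk⟩, mem_prefixSet.2 (by simp; omega), ?_⟩
  have := add_le_one_of_abs_sub_half_le (by linarith [hpos (e ⟨k - 1, hk⟩)])
    (h.abs_sub_half_le hpos hsum (k' := k - 1) (by omega))
  linarith

lemma IsPrefixMatch.exists_notMem_le (hn : 2 ≤ n) (hpos : ∀ i, 0 < π i)
    (hsum : ∑ i, π i = 1)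
    (h : IsPrefixMatch π e k) (hfull : 1 / 2 ≤ mass π (prefixSet e N))
    (hq : mass π (prefixSet e k) ≤ 1 / 2) :
    ∃ j ∉ prefixSet e k, 1 - 2 * mass π (prefixSet e k) ≤ π j := by
  obtain ⟨hk1, hkN⟩ := mem_Icc.1 h.1
  rcases hkN.lt_or_eq with hk | rfl
  · refine ⟨e ⟨k, hk⟩, fun hmem => (mem_prefixSet.1 hmem).false, ?_⟩
    have := one_le_add_of_abs_sub_half_le
      (by linarith [mass_prefixSet_succ π e hk, hpos (e ⟨k, hk⟩)])
      (h.2 (k + 1) (mem_Icc.2 ⟨by omega, hk⟩))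
    linarith [mass_prefixSet_succ π e hk]
  · obtain ⟨j, hj⟩ : ∃ j, j ∉ prefixSet e k := by
      by_contra! hall
      exact h.ne_univ hn hpos hsum (eq_univ_of_forall hall)
    exact ⟨j, hj, by linarith [hpos j]⟩

lemma IsPrefixMatch.eq_one (hpos : ∀ i, 0 < π i) (h : IsPrefixMatch π e k) (hN : 0 < N)
    (hhalf : 1 / 2 ≤ π (e ⟨0, hN⟩)) : k = 1 := by
  obtain ⟨hk1, hkN⟩ := mem_Icc.1 h.1
  by_contra hne
  have h1 : mass π (prefixSet e 1) = π (e ⟨0, hN⟩) := by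
    rw [mass_prefixSet_succ π e hN, mass_prefixSet_zero, zero_add]
  have h2 : mass π (prefixSet e 2) = π (e ⟨0, hN⟩) + π (e ⟨1, by omega⟩) := by
    rw [mass_prefixSet_succ π e (by omega : 1 < N), h1]
  have hk2 := mass_prefixSet_mono hpos e (show 2 ≤ k by omega)
  have hmin := h.2 1 (mem_Icc.2 ⟨le_rfl, by omega⟩)
  simp only at hk2
  rw [abs_of_nonneg (by linarith [hpos (e ⟨1, by omega⟩)]), abs_of_nonneg (by linarith)] at hmin
  linarith [hpos (e ⟨1, by omega⟩)]

lemma prefixSet_one (e : Fin N ↪ Fin n) (hN : 0 < N) : prefixSet e 1 = {e ⟨0, hN⟩} := by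
  ext i
  simp only [prefixSet, Finset.mem_map, mem_filter, mem_univ, true_and, Nat.lt_one_iff,
    mem_singleton]
  constructor
  · rintro ⟨j, hj, rfl⟩
    exact congrArg e (Fin.ext hj)
  · rintro rfl
    exact ⟨_, rfl, rfl⟩

theorem IsPrefixMatch.isPMQuery (hn : 2 ≤ n) (hpos : ∀ i, 0 < π i) (hsum : ∑ i, π i = 1)
    (h : IsPrefixMatch π e k) (hN : 0 < N) (hfull : 1 / 2 ≤ mass π (prefixSet e N))
    (hmax : (∃ i, 1 / 2 ≤ π i) → ∀ i, π i ≤ π (e ⟨0, hN⟩)) :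
    IsPMQuery π (prefixSet e k) where
  nonempty := ⟨e ⟨0, hN⟩, mem_prefixSet.2 (mem_Icc.1 h.1).1⟩
  ne_univ := h.ne_univ hn hpos hsum
  exists_mem_le _ := h.exists_mem_le hpos hsum
  exists_notMem_le := h.exists_notMem_le hn hpos hsum hfull
  eq_singleton := fun ⟨i, hi⟩ => by
    have hmax := hmax ⟨i, hi⟩
    rw [h.eq_one hpos hN (hi.trans (hmax i)), prefixSet_one e hN]
    exact ⟨_, rfl, hmax⟩

end Prefix

theorem IsSortPM.isPMQuery (hn : 2 ≤ n) {γ : (Fin n → ℝ) → Finset (Fin n)} (hγ : IsSortPM γ)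
    {π : Fin n → ℝ} (hpos : ∀ i, 0 < π i) (hsum : ∑ i, π i = 1) : IsPMQuery π (γ π) := by
  obtain ⟨σ, hanti, k, hk, hmin, hS⟩ := hγ π
  have hprefix : univ.filter (fun i => ((σ.symm i : Fin n) : ℕ) < k) =
      prefixSet σ.toEmbedding k := by
    ext i
    rw [← σ.apply_symm_apply i]
    simp only [mem_filter, mem_univ, true_and, Equiv.symm_apply_apply]
    exact mem_prefixSet.symm
  have hmass : ∀ k, ∑ j ∈ univ.filter (fun j : Fin n => (j : ℕ) < k), π (σ j) =
      mass π (prefixSet σ.toEmbedding k) := fun k => (mass_prefixSet π σ.toEmbedding k).symm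
  simp only [hmass] at hmin
  have hfull : prefixSet σ.toEmbedding n = univ :=
    eq_univ_of_forall fun i => σ.apply_symm_apply i ▸ mem_prefixSet.2 (σ.symm i).isLt
  rw [hS, hprefix]
  refine IsPrefixMatch.isPMQuery hn hpos hsum ⟨hk, hmin⟩ (by omega)
    (by rw [hfull, mass_univ hsum]; norm_num) fun _ i => ?_
  simpa using hanti (show (⟨0, by omega⟩ : Fin n) ≤ σ.symm i from Nat.zero_le _)

def intervalEmb (n a : ℕ) : Fin (n - a) ↪ Fin n where
  toFun j := ⟨a + j, by omega⟩
  inj' i j h := Fin.ext (by simpa using congrArg Fin.val h)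

@[simp]
lemma coe_intervalEmb (a : ℕ) (j : Fin (n - a)) : (intervalEmb n a j : ℕ) = a + j := rfl

lemma intervalFromTo_eq_prefixSet (a b : ℕ) :
    intervalFromTo n a b = prefixSet (intervalEmb n a) (b - a) := by
  ext i
  simp only [intervalFromTo, mem_filter, mem_univ, true_and]
  constructor
  · rintro ⟨hai, hib⟩
    refine Finset.mem_map.2 ⟨⟨i - a, by omega⟩, ?_, Fin.ext (by simp; omega)⟩
    simp only [mem_filter, mem_univ, true_and]
    omega
  · intro hi
    obtain ⟨j, hj, rfl⟩ := Finset.mem_map.1 hi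
    simp only [mem_filter, mem_univ, true_and] at hj
    simp only [coe_intervalEmb]
    omega

lemma hset_self (L : ℕ) (i : Fin n) : hset n L L i = {i} := by
  ext j
  simp only [hset, intervalFromTo, Nat.sub_self, pow_zero, mul_one, mem_filter, mem_univ,
    true_and, mem_singleton, Fin.ext_iff]
  omega

theorem IsDyaPM.isPMQuery (hn : 2 ≤ n) {L : ℕ} (hL : n = 2 ^ L)
    {γ : (Fin n → ℝ) → Finset (Fin n)} (hγ : IsDyaPM L γ)
    {π : Fin n → ℝ} (hpos : ∀ i, 0 < π i) (hsum : ∑ i, π i = 1) : IsPMQuery π (γ π) := by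
  obtain ⟨l, hl, m, hm, hhalf, hdeep, hargmax, k, hk, hmin, hS⟩ := hγ π
  set a := m * 2 ^ (L - l)
  obtain ⟨hak, hkn⟩ := mem_Icc.1 hk
  rw [hS, intervalFromTo_eq_prefixSet]
  refine IsPrefixMatch.isPMQuery hn hpos hsum ⟨mem_Icc.2 ⟨by omega, by omega⟩, fun k' hk' => ?_⟩
    (by omega) ?_ ?_
  · have h := hmin (a + k') (mem_Icc.2 (by rw [mem_Icc] at hk'; omega))
    rwa [intervalFromTo_eq_prefixSet, intervalFromTo_eq_prefixSet, Nat.add_sub_cancel_left] at h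
  · rw [← intervalFromTo_eq_prefixSet]
    refine hhalf.trans (mass_mono hpos fun i => ?_)
    simp only [hset, intervalFromTo, mem_filter, mem_univ, true_and]
    omega
  · rintro ⟨i, hi⟩ j
    have hlL : l = L := le_antisymm hl <| hdeep L le_rfl i (hL ▸ i.isLt) <| by
      rwa [hset_self, mass, sum_singleton]
    subst hlL
    have hmn : m < n := hL ▸ hm
    have h := hargmax j (hL ▸ j.isLt)
    rw [hset_self, show hset n l l m = hset n l l (⟨m, hmn⟩ : Fin n) from rfl, hset_self, mass,
      mass, sum_singleton, sum_singleton] at h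
    convert h using 2
    exact Fin.ext (by simp [a])

lemma half_le_piTilde (hn : 3 ≤ n) (ε : ℝ) : 1 / 2 ≤ piTilde n ε := by
  have hlog3 : 1 < Real.log 3 := (Real.lt_log_iff_exp_lt (by norm_num)).2 Real.exp_one_lt_three
  have hlogn : Real.log 3 ≤ Real.log n := Real.log_le_log (by norm_num) (by exact_mod_cast hn)
  have hM := le_max_left (Real.log n) (Real.log (1 / ε))
  have := one_div_le_one_div_of_le (by norm_num : (0 : ℝ) < 2)
    (by linarith : (2 : ℝ) ≤ 1 + max (Real.log n) (Real.log (1 / ε)))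
  rw [piTilde]
  linarith

lemma exists_half_le_of_piTilde_le (hn : 2 ≤ n) {π : Fin n → ℝ} (hsum : ∑ i, π i = 1)
    {ε : ℝ} {i : Fin n} (hi : piTilde n ε ≤ π i) : ∃ j, 1 / 2 ≤ π j := by
  rcases hn.eq_or_lt with rfl | hn3
  · obtain ⟨j, -, hj⟩ := exists_le_of_sum_le (s := univ) (f := fun _ => (1 / 2 : ℝ))
      ⟨i, mem_univ i⟩ (by rw [hsum]; norm_num)
    exact ⟨j, hj⟩
  · exact ⟨i, (half_le_piTilde hn3 ε).trans hi⟩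

end SearchPaper

open SearchPaper in
theorem statement7_general (p : ℝ → ℝ) (hp : NoiseOK p) (n : ℕ) (hn : 2 ≤ n)
    (ε : ℝ)
    (γ : (Fin n → ℝ) → Finset (Fin n))
    (hγ : IsSortPM γ ∨ ∃ L : ℕ, n = 2 ^ L ∧ IsDyaPM L γ)
    (y : ℕ → Bool) (t : ℕ) :
    mutInfo (1 / 2) (crossover p n (γ (posterior p γ y t))) ≤
        EJS p (γ (posterior p γ y t)) (posterior p γ y t) ∧
      ((∃ i, piTilde n ε ≤ posterior p γ y t i) →
        piTilde n ε * C1 (p ((n : ℝ)⁻¹)) ≤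
          EJS p (γ (posterior p γ y t)) (posterior p γ y t)) := by
  have hquery : ∀ π : Fin n → ℝ, (∀ i, 0 < π i) → ∑ i, π i = 1 → IsPMQuery π (γ π) := by
    rcases hγ with hsort | ⟨L, hL, hdya⟩
    · exact fun π => hsort.isPMQuery hn
    · exact fun π => hdya.isPMQuery hn hL
  have : NeZero n := ⟨by omega⟩
  obtain ⟨hpos, hsum⟩ := posterior_pos_and_sum_eq_one p (y := y)
    (fun π hpos hsum => Set.Ioo_subset_Ioo_right (by norm_num)
      ((hquery π hpos hsum).crossover_mem_Ioo hp)) t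
  set π := posterior p γ y t
  have hq := hquery π hpos hsum
  obtain ⟨hc0, hc1⟩ := hq.crossover_mem_Ioo hp
  refine ⟨mutInfo_half_le_EJS hn p hpos hsum hc0 (by linarith) hq.exists_mem_le
    hq.exists_notMem_le, fun ⟨i, hi⟩ => ?_⟩
  obtain ⟨s, hS, hmax⟩ := hq.eq_singleton (exists_half_le_of_piTilde_le hn hsum hi)
  obtain ⟨hs0, hs1⟩ :=
    hp.1 (n : ℝ)⁻¹ ⟨by positivity, inv_lt_one_of_one_lt₀ (by exact_mod_cast hn)⟩
  rw [hS]
  calc piTilde n ε * C1 (p (n : ℝ)⁻¹)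
      ≤ π s * C1 (p (n : ℝ)⁻¹) :=
        mul_le_mul_of_nonneg_right (hi.trans (hmax i)) (C1_nonneg hs0 (by linarith))
    _ ≤ EJS p {s} π := mul_C1_le_EJS_singleton hn p s hpos hsum hs0 (by linarith)

open SearchPaper in
/-- Lemma: EJS lower bounds for `sortPM` and `dyaPM`. Under either the
`sortPM` or the `dyaPM` strategy with resolution `1/δ` and reliability `ε`, for every time
`t`, `EJS(π(t), γ) ≥ I(1/2, p(δ|S_{t+1}|))`, and whenever `max_i π_i(t) ≥ π̃` also
`EJS(π(t), γ) ≥ π̃ C₁(p(δ))`, where `π̃ = 1 - 1/(1 + max{log(1/δ), log(1/ε)})`. -/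
theorem statement7 (p : ℝ → ℝ) (hp : NoiseOK p) (n : ℕ) (hn : 2 ≤ n)
    (ε : ℝ) (hε0 : 0 < ε) (hε1 : ε < 1)
    (γ : (Fin n → ℝ) → Finset (Fin n))
    (hγ : IsSortPM γ ∨ ∃ L : ℕ, n = 2 ^ L ∧ IsDyaPM L γ)
    (y : ℕ → Bool) (t : ℕ) :
    mutInfo (1 / 2) (crossover p n (γ (posterior p γ y t))) ≤
        EJS p (γ (posterior p γ y t)) (posterior p γ y t) ∧
      ((∃ i, piTilde n ε ≤ posterior p γ y t i) →
        piTilde n ε * C1 (p ((n : ℝ)⁻¹)) ≤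
          EJS p (γ (posterior p γ y t)) (posterior p γ y t)) :=
  statement7_general p hp n hn ε γ hγ y t
end

section
/- Let 0 < p < 1/2 and set B₁ = Bern(1−p), B₀ = Bern(p). Define f(ρ) = ρ·D(B₁ ‖ (3/4)B₁ + (1/4)B₀) and g(ρ) = (1/2−ρ)·D((1−4ρ)B₁ + 4ρB₀ ‖ (1/2+ρ)B₁ + (1/2−ρ)B₀). Then f is positive and increasing on (0,1/2], g(0) > 0, and consequently min_{ρ∈(0,1/4]} max{f(ρ), g(ρ)} > 0 and min_{ρ∈(1/4,1/2]} f(ρ) > 0; in particular K_d = min{ min_{ρ∈[0,1/4]} max{f(ρ), g(ρ)}, min_{ρ∈[1/4,1/2]} f(ρ), (1/4)·D((1/4)B₁ + (3/4)B₀ ‖ B₀) } > 0. -/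
open MeasureTheory Filter

/-! For `0 < b < 1`, `D(Bern a ‖ Bern b) = b φ(a/b) + (1-b) φ((1-a)/(1-b))` with
`φ x = x log x + 1 - x ≥ 0` vanishing only at `1`, so the divergence is positive when `a ≠ b`.
Hence `f` is linear with positive slope and `g(0) > 0`; as `g` is continuous at `0`,
`max{f, g}` is bounded below by `g` near `0` and by `f` away from `0`. -/

theorem lt_csInf_image_of_forall_le {α : Type*} {f : α → ℝ} {s : Set α} {a m : ℝ}
    (hs : s.Nonempty) (ham : a < m) (h : ∀ x ∈ s, m ≤ f x) : a < sInf (f '' s) :=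
  ham.trans_le (le_csInf (hs.image f) (Set.forall_mem_image.2 h))

theorem exists_pos_forall_le_max_mul_of_continuousAt {G : ℝ → ℝ} {c : ℝ} (hc : 0 < c)
    (hG : ContinuousAt G 0) (hG0 : 0 < G 0) :
    ∃ m > 0, ∀ ρ, 0 ≤ ρ → m ≤ max (ρ * c) (G ρ) := by
  obtain ⟨δ, hδ, hnear⟩ :=
    Metric.eventually_nhds_iff.1 (hG.eventually (Ioi_mem_nhds (half_lt_self hG0)))
  refine ⟨min (δ / 2 * c) (G 0 / 2), lt_min (by positivity) (by positivity), fun ρ hρ => ?_⟩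
  rcases lt_or_ge ρ δ with hρδ | hδρ
  · have hGρ : G 0 / 2 < G ρ := hnear (by rwa [Real.dist_eq, sub_zero, abs_of_nonneg hρ])
    exact le_max_of_le_right ((min_le_right _ _).trans hGρ.le)
  · have hcρ : δ / 2 * c ≤ ρ * c := by gcongr; linarith
    exact le_max_of_le_left ((min_le_left _ _).trans hcρ)

namespace SearchPaper

open Real InformationTheory

theorem klBern_eq_klFun (a : ℝ) {b : ℝ} (hb0 : b ≠ 0) (hb1 : b ≠ 1) :
    klBern a b = b * klFun (a / b) + (1 - b) * klFun ((1 - a) / (1 - b)) := by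
  have hb1' : 1 - b ≠ 0 := sub_ne_zero.2 hb1.symm
  simp only [klBern, klFun_apply]
  field_simp
  ring

theorem klBern_pos {a b : ℝ} (ha0 : 0 ≤ a) (ha1 : a ≤ 1) (hb0 : 0 < b) (hb1 : b < 1)
    (hab : a ≠ b) : 0 < klBern a b := by
  rw [klBern_eq_klFun a hb0.ne' hb1.ne]
  have hfirst : 0 < klFun (a / b) := by
    refine (klFun_nonneg (by positivity)).lt_of_ne' fun h => hab ?_
    exact (div_eq_one_iff_eq hb0.ne').1 ((klFun_eq_zero_iff (by positivity)).1 h)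
  have hsecond : 0 ≤ klFun ((1 - a) / (1 - b)) :=
    klFun_nonneg (div_nonneg (by linarith) (by linarith))
  have hb1' : 0 < 1 - b := by linarith
  positivity

theorem continuousAt_klBern {f g : ℝ → ℝ} {x : ℝ} (hf : ContinuousAt f x)
    (hg : ContinuousAt g x) (hf0 : f x ≠ 0) (hf1 : f x ≠ 1) (hg0 : g x ≠ 0) (hg1 : g x ≠ 1) :
    ContinuousAt (fun y => klBern (f y) (g y)) x := by
  have hf' : ContinuousAt (fun y => 1 - f y) x := continuousAt_const.sub hf
  have hg' : ContinuousAt (fun y => 1 - g y) x := continuousAt_const.sub hg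
  have hf1' : 1 - f x ≠ 0 := sub_ne_zero.2 hf1.symm
  have hg1' : 1 - g x ≠ 0 := sub_ne_zero.2 hg1.symm
  exact (hf.mul ((hf.div hg hg0).log (div_ne_zero hf0 hg0))).add
    (hf'.mul ((hf'.div hg' hg1').log (div_ne_zero hf1' hg1')))

theorem gK_zero (q : ℝ) : gK q 0 = 1 / 2 * klBern (1 - q) (1 / 2) := by
  rw [gK, show (1 / 2 + 0 : ℝ) * (1 - q) + (1 / 2 - 0) * q = 1 / 2 by ring]
  norm_num

theorem continuousAt_gK_zero {q : ℝ} (hq0 : q ≠ 0) (hq1 : q ≠ 1) : ContinuousAt (gK q) 0 := by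
  refine continuousAt_const.sub continuousAt_id |>.mul
    (continuousAt_klBern (by fun_prop) (by fun_prop) ?_ ?_ ?_ ?_) <;> norm_num <;> intro h
  all_goals first | exact hq0 (by linarith) | exact hq1 (by linarith)

end SearchPaper

open SearchPaper in
/-- Positivity of `K_d`. Let `0 < p < 1/2`, `B₁ = Bern(1-p)`,
`B₀ = Bern(p)`, `f(ρ) = ρ D(B₁ ‖ (3/4)B₁ + (1/4)B₀)` and
`g(ρ) = (1/2-ρ) D((1-4ρ)B₁ + 4ρB₀ ‖ (1/2+ρ)B₁ + (1/2-ρ)B₀)`. Then `f` is positive and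
increasing on `(0,1/2]`, `g(0) > 0`, consequently `min_{ρ∈(0,1/4]} max{f,g} > 0` and
`min_{ρ∈(1/4,1/2]} f > 0`; in particular `K_d > 0`. -/
theorem statement13 (q : ℝ) (hq0 : 0 < q) (hq1 : q < 1 / 2) :
    (∀ ρ ∈ Set.Ioc (0 : ℝ) (1 / 2), 0 < fK q ρ) ∧
      StrictMonoOn (fK q) (Set.Ioc (0 : ℝ) (1 / 2)) ∧
      0 < gK q 0 ∧
      0 < sInf ((fun ρ => max (fK q ρ) (gK q ρ)) '' Set.Ioc (0 : ℝ) (1 / 4)) ∧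
      0 < sInf (fK q '' Set.Ioc (1 / 4 : ℝ) (1 / 2)) ∧
      0 < min (sInf ((fun ρ => max (fK q ρ) (gK q ρ)) '' Set.Icc (0 : ℝ) (1 / 4)))
          (min (sInf (fK q '' Set.Icc (1 / 4 : ℝ) (1 / 2)))
            (1 / 4 * klBern (1 / 4 * (1 - q) + 3 / 4 * q) q)) := by
  set c := klBern (1 - q) (3 / 4 * (1 - q) + 1 / 4 * q)
  have hc : 0 < c := klBern_pos (by linarith) (by linarith) (by linarith) (by linarith)
    (by intro h; linarith)
  have hg0 : 0 < gK q 0 := by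
    rw [gK_zero]
    have := klBern_pos (by linarith) (by linarith) one_half_pos one_half_lt_one
      (by intro h; linarith : 1 - q ≠ 1 / 2)
    positivity
  obtain ⟨m, hm, hmax⟩ := exists_pos_forall_le_max_mul_of_continuousAt hc
    (continuousAt_gK_zero hq0.ne' (by linarith)) hg0
  have hf_far : ∀ ρ ∈ Set.Icc (1 / 4 : ℝ) (1 / 2), 1 / 4 * c ≤ fK q ρ := fun ρ hρ =>
    mul_le_mul_of_nonneg_right hρ.1 hc.le
  have hlast : 0 < klBern (1 / 4 * (1 - q) + 3 / 4 * q) q :=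
    klBern_pos (by linarith) (by linarith) hq0 (by linarith) (by intro h; linarith)
  refine ⟨fun ρ hρ => mul_pos hρ.1 hc, fun a _ b _ hab => mul_lt_mul_of_pos_right hab hc, hg0,
    lt_csInf_image_of_forall_le ⟨1 / 4, by norm_num⟩ hm fun ρ hρ => hmax ρ hρ.1.le,
    lt_csInf_image_of_forall_le ⟨1 / 2, by norm_num⟩ (by positivity)
      fun ρ hρ => hf_far ρ (Set.Ioc_subset_Icc_self hρ),
    lt_min (lt_csInf_image_of_forall_le ⟨0, by norm_num⟩ hm fun ρ hρ => hmax ρ hρ.1)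
      (lt_min (lt_csInf_image_of_forall_le ⟨1 / 4, by norm_num⟩ (by positivity) hf_far)
        (by positivity))⟩
end

section
/- Let π = (π₁,...,π_n) be a probability vector with π_i ∈ (0,1) for all i, and let P₁,...,P_n be probability distributions on a finite set Y with P_i(y) > 0 for all i and y. Then the Extrinsic Jensen–Shannon divergence dominates the Jensen–Shannon divergence: Σ_i π_i·D(P_i ‖ Σ_{j≠i} (π_j/(1−π_i))·P_j) ≥ Σ_i π_i·D(P_i ‖ Σ_j π_j·P_j). -/
open MeasureTheory Filter

/-! The mixture `∑ⱼ πⱼ Pⱼ` splits as `πᵢ Pᵢ + (1 - πᵢ) Rᵢ`, where `Rᵢ` is the leave-one-out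
mixture appearing in the extrinsic divergence. Concavity of `log` gives
`D(Pᵢ ‖ πᵢ Pᵢ + (1 - πᵢ) Rᵢ) ≤ (1 - πᵢ) D(Pᵢ ‖ Rᵢ)`, and by Gibbs' inequality the right-hand
side is at most `D(Pᵢ ‖ Rᵢ)`. Summing with weights `πᵢ` gives the claim. -/

namespace SearchPaper

open Finset

section KL

variable {Y : Type*} [Fintype Y]

theorem klFin_nonneg {P Q : Y → ℝ} (hP : ∀ y, 0 < P y) (hQ : ∀ y, 0 < Q y)
    (hsum : ∑ y, Q y ≤ ∑ y, P y) : 0 ≤ klFin P Q := by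
  have hterm : ∀ y, P y - Q y ≤ P y * Real.log (P y / Q y) := fun y => by
    have h := Real.one_sub_inv_le_log_of_pos (div_pos (hP y) (hQ y))
    rw [inv_div] at h
    calc P y - Q y = P y * (1 - Q y / P y) := by field_simp [(hP y).ne']
      _ ≤ P y * Real.log (P y / Q y) := mul_le_mul_of_nonneg_left h (hP y).le
  calc (0 : ℝ) ≤ ∑ y, (P y - Q y) := by rw [sum_sub_distrib]; linarith
    _ ≤ klFin P Q := sum_le_sum fun y _ => hterm y

theorem klFin_mix_le {P R : Y → ℝ} (hP : ∀ y, 0 < P y) (hR : ∀ y, 0 < R y) {t : ℝ}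
    (ht₀ : 0 ≤ t) (ht₁ : t ≤ 1) :
    klFin P (fun y => t * P y + (1 - t) * R y) ≤ (1 - t) * klFin P R := by
  rw [klFin, klFin, mul_sum]
  refine sum_le_sum fun y _ => ?_
  have hmix : 0 < t * P y + (1 - t) * R y :=
    convex_Ioi (0 : ℝ) (hP y) (hR y) ht₀ (sub_nonneg.2 ht₁) (by ring)
  have hconc : t * Real.log (P y) + (1 - t) * Real.log (R y) ≤
      Real.log (t * P y + (1 - t) * R y) :=
    strictConcaveOn_log_Ioi.concaveOn.2 (Set.mem_Ioi.2 (hP y)) (Set.mem_Ioi.2 (hR y))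
      ht₀ (sub_nonneg.2 ht₁) (by ring)
  rw [Real.log_div (hP y).ne' hmix.ne', Real.log_div (hP y).ne' (hR y).ne']
  nlinarith [hP y]

end KL

section LeaveOneOut

variable {ι Y : Type*} [Fintype ι] [DecidableEq ι] (π : ι → ℝ) (P : ι → Y → ℝ)

noncomputable def leaveOneOutMix (i : ι) (y : Y) : ℝ :=
  ∑ j ∈ univ.erase i, π j / (1 - π i) * P j y

variable {π}

theorem one_sub_mul_leaveOneOutMix {i : ι} (hi : π i ≠ 1) (y : Y) :
    (1 - π i) * leaveOneOutMix π P i y = ∑ j ∈ univ.erase i, π j * P j y := by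
  have h : 1 - π i ≠ 0 := sub_ne_zero.2 hi.symm
  rw [leaveOneOutMix, mul_sum]
  refine sum_congr rfl fun j _ => ?_
  field_simp

theorem sum_mul_eq_add_leaveOneOutMix {i : ι} (hi : π i ≠ 1) (y : Y) :
    ∑ j, π j * P j y = π i * P i y + (1 - π i) * leaveOneOutMix π P i y := by
  rw [one_sub_mul_leaveOneOutMix P hi, ← add_sum_erase _ _ (mem_univ i)]

theorem leaveOneOutMix_pos (hπ : ∀ j, 0 < π j) (hπsum : ∑ j, π j = 1) {i : ι} (hi : π i < 1)
    (hP : ∀ j y, 0 < P j y) (y : Y) : 0 < leaveOneOutMix π P i y := by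
  have hrest : ∑ j ∈ univ.erase i, π j = 1 - π i := by rw [sum_erase_eq_sub (mem_univ i), hπsum]
  have hne : (univ.erase i).Nonempty :=
    nonempty_of_sum_ne_zero (by rw [hrest]; linarith : ∑ j ∈ univ.erase i, π j ≠ 0)
  exact sum_pos (fun j _ => mul_pos (div_pos (hπ j) (by linarith)) (hP j y)) hne

theorem sum_leaveOneOutMix [Fintype Y] (hπsum : ∑ j, π j = 1) {i : ι} (hi : π i ≠ 1)
    (hPsum : ∀ j, ∑ y, P j y = 1) : ∑ y, leaveOneOutMix π P i y = 1 := by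
  have h : 1 - π i ≠ 0 := sub_ne_zero.2 hi.symm
  rw [← mul_right_inj' h, mul_sum]
  simp_rw [one_sub_mul_leaveOneOutMix P hi]
  rw [sum_comm]
  simp_rw [← mul_sum, hPsum, mul_one]
  rw [sum_erase_eq_sub (mem_univ i), hπsum]

end LeaveOneOut

end SearchPaper

open SearchPaper in
/-- EJS dominates JS. For a probability vector `π` with entries in
`(0,1)` and probability distributions `P₁,...,P_n` on a finite set `Y` with positive
mass everywhere,
`∑_i π_i D(P_i ‖ ∑_{j≠i} (π_j/(1-π_i)) P_j) ≥ ∑_i π_i D(P_i ‖ ∑_j π_j P_j)`. -/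
theorem statement15 {m : ℕ} {Y : Type*} [Fintype Y]
    (π : Fin m → ℝ) (P : Fin m → Y → ℝ)
    (hπ : ∀ i, π i ∈ Set.Ioo (0 : ℝ) 1) (hπsum : ∑ i, π i = 1)
    (hP : ∀ i y, 0 < P i y) (hPsum : ∀ i, ∑ y, P i y = 1) :
    ∑ i, π i * klFin (P i) (fun y => ∑ j ∈ Finset.univ.erase i, π j / (1 - π i) * P j y) ≥
      ∑ i, π i * klFin (P i) (fun y => ∑ j, π j * P j y) := by
  refine Finset.sum_le_sum fun i _ => mul_le_mul_of_nonneg_left ?_ (hπ i).1.le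
  obtain ⟨hi₀, hi₁⟩ := hπ i
  have hR := leaveOneOutMix_pos P (fun j => (hπ j).1) hπsum hi₁ hP
  calc klFin (P i) (fun y => ∑ j, π j * P j y)
      = klFin (P i) (fun y => π i * P i y + (1 - π i) * leaveOneOutMix π P i y) := by
        simp_rw [sum_mul_eq_add_leaveOneOutMix P hi₁.ne]
    _ ≤ (1 - π i) * klFin (P i) (leaveOneOutMix π P i) :=
        klFin_mix_le (hP i) hR hi₀.le hi₁.le
    _ ≤ klFin (P i) (leaveOneOutMix π P i) :=
        mul_le_of_le_one_left (klFin_nonneg (hP i) hR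
          (by rw [sum_leaveOneOutMix P hπsum hi₁.ne hPsum, hPsum])) (by linarith)
end

section
/- Let π = (π₁,...,π_n) be a probability vector with π_i ∈ (0,1) for all i, and let P₁,...,P_n be probability distributions on a finite set Y with P_i(y) > 0 for all i and y. Let P(y) = Σ_i π_i·P_i(y), and for each y let π'(y) be the Bayes posterior π'_i(y) = π_i·P_i(y)/P(y). Then the expected one-step increase of the average log-likelihood equals the Extrinsic Jensen–Shannon divergence: Σ_y P(y)·U(π'(y)) = U(π) + Σ_i π_i·D(P_i ‖ Σ_{j≠i} (π_j/(1−π_i))·P_j). -/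
open MeasureTheory Filter

/-! Writing `Q_i = ∑_{j≠i} π_j P_j`, one has `1 - π'_i(y) = Q_i(y)/P̄(y)`, so the posterior
term `P̄(y) π'_i(y) log(π'_i(y)/(1-π'_i(y)))` collapses to
`π_i P_i(y) log(π_i P_i(y)/Q_i(y))`.
Factoring `π_i P_i/Q_i = (π_i/(1-π_i)) · P_i/(Q_i/(1-π_i))` and summing over `y` splits the
contribution of `i` into `π_i log(π_i/(1-π_i))` and `π_i D(P_i ‖ Q_i/(1-π_i))`. -/

namespace SearchPaper

open Finset Real

theorem mul_llr_div {s : ℝ} (hs : s ≠ 0) (a : ℝ) :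
    s * llr (a / s) = a * log (a / (s - a)) := by
  have hratio : a / s / (1 - a / s) = a / (s - a) := by
    rw [one_sub_div hs, div_div_div_cancel_right₀ hs]
  rw [llr, hratio, ← mul_assoc, mul_div_cancel₀ a hs]

theorem sum_mul_avgLL_div_sum {m : ℕ} (w : Fin m → ℝ) (hw : ∑ j, w j ≠ 0) :
    (∑ j, w j) * avgLL (fun i => w i / ∑ j, w j) =
      ∑ i, w i * log (w i / ∑ j ∈ univ.erase i, w j) := by
  rw [avgLL, mul_sum]
  refine sum_congr rfl fun i _ => ?_
  rw [mul_llr_div hw, sum_erase_eq_sub (mem_univ i)]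

theorem sum_mul_mul_log_mul_div {Y : Type*} [Fintype Y] (P Q : Y → ℝ) {a c : ℝ}
    (ha : a ≠ 0) (hc : c ≠ 0) (hQ : ∀ y, Q y ≠ 0) :
    ∑ y, a * P y * log (a * P y / Q y) =
      (∑ y, P y) * (a * log (a / c)) + a * klFin P (fun y => Q y / c) := by
  rw [klFin, sum_mul, mul_sum, ← sum_add_distrib]
  refine sum_congr rfl fun y _ => ?_
  rcases eq_or_ne (P y) 0 with hP | hP
  · simp [hP]
  have hsplit : a * P y / Q y = a / c * (P y / (Q y / c)) := by
    field_simp [hQ y]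
  rw [hsplit, log_mul (div_ne_zero ha hc) (div_ne_zero hP (div_ne_zero (hQ y) hc))]
  ring

end SearchPaper

open SearchPaper in
/-- The expected one-step increase of the average log-likelihood equals
the EJS divergence. With `P̄(y) = ∑_i π_i P_i(y)` and Bayes posterior
`π'_i(y) = π_i P_i(y)/P̄(y)`,
`∑_y P̄(y) U(π'(y)) = U(π) + ∑_i π_i D(P_i ‖ ∑_{j≠i} (π_j/(1-π_i)) P_j)`. -/
theorem statement16 {m : ℕ} {Y : Type*} [Fintype Y]
    (π : Fin m → ℝ) (P : Fin m → Y → ℝ)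
    (hπ : ∀ i, π i ∈ Set.Ioo (0 : ℝ) 1) (hπsum : ∑ i, π i = 1)
    (hP : ∀ i y, 0 < P i y) (hPsum : ∀ i, ∑ y, P i y = 1) :
    ∑ y, (∑ i, π i * P i y) * avgLL (fun i => π i * P i y / ∑ j, π j * P j y) =
      avgLL π +
        ∑ i, π i * klFin (P i)
          (fun y => ∑ j ∈ Finset.univ.erase i, π j / (1 - π i) * P j y) := by
  have hpos : ∀ i, 0 < π i := fun i => (hπ i).1
  have hcompl : ∀ i, 0 < 1 - π i := fun i => sub_pos.2 (hπ i).2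
  have hrest_nonempty : ∀ i, (Finset.univ.erase i).Nonempty := fun i =>
    Finset.nonempty_of_sum_ne_zero (f := π) <| by
      rw [Finset.sum_erase_eq_sub (Finset.mem_univ i), hπsum]
      exact (hcompl i).ne'
  have hrest_pos : ∀ i y, 0 < ∑ j ∈ Finset.univ.erase i, π j * P j y := fun i y =>
    Finset.sum_pos (fun j _ => mul_pos (hpos j) (hP j y)) (hrest_nonempty i)
  have hmixture_ne : ∀ y, ∑ j, π j * P j y ≠ 0 := fun y =>
    (Finset.sum_pos (fun j _ => mul_pos (hpos j) (hP j y)) (Finset.nonempty_of_sum_ne_zero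
      (hπsum ▸ one_ne_zero))).ne'
  have hrest_div : ∀ i, (fun y => ∑ j ∈ Finset.univ.erase i, π j / (1 - π i) * P j y) =
      fun y => (∑ j ∈ Finset.univ.erase i, π j * P j y) / (1 - π i) := fun i => by
    funext y
    simp only [div_mul_eq_mul_div, Finset.sum_div]
  calc ∑ y, (∑ i, π i * P i y) * avgLL (fun i => π i * P i y / ∑ j, π j * P j y)
      = ∑ y, ∑ i, π i * P i y *
          Real.log (π i * P i y / ∑ j ∈ Finset.univ.erase i, π j * P j y) :=
        Finset.sum_congr rfl fun y _ =>
          sum_mul_avgLL_div_sum (fun i => π i * P i y) (hmixture_ne y)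
    _ = ∑ i, ∑ y, π i * P i y *
          Real.log (π i * P i y / ∑ j ∈ Finset.univ.erase i, π j * P j y) :=
        Finset.sum_comm
    _ = _ := by
        rw [avgLL, ← Finset.sum_add_distrib]
        refine Finset.sum_congr rfl fun i _ => ?_
        rw [sum_mul_mul_log_mul_div (P i) _ (hpos i).ne' (hcompl i).ne'
            fun y => (hrest_pos i y).ne', hPsum, one_mul, hrest_div, SearchPaper.llr]
end
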